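/- arXiv:2201.06522 — 6 statements merged into one kernel-verified Lean document; each statement's English description precedes it below -/
import Mathlib

section
/- If (i,j) lies in the Rothe diagram D(w) of a permutation w, then there exists (a,b) in the essential set E(w) with a ≥ i, b ≥ j, lying in the same connected component of D(w) as (i,j), and with r_{a,b}(w) = r_{i,j}(w). -/
/-- Rank function of a permutation: `rk w i j = #{a : 1 ≤ a ≤ i, w a ≤ j}`. -/
def rk (w : Equiv.Perm ℕ) (i j : ℕ) : ℕ :=
  ((Finset.Icc 1 i).filter (fun a => w a ≤ j)).card

/-- `(i,j)` is in the Rothe diagram `D(w)`. -/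
def inRothe (w : Equiv.Perm ℕ) (i j : ℕ) : Prop :=
  j < w i ∧ i < w.symm j

instance (w : Equiv.Perm ℕ) (i j : ℕ) : Decidable (inRothe w i j) := by
  unfold inRothe; infer_instance

/-- `(i,j)` is in Fulton's essential set `E(w)`. -/
def inEss (w : Equiv.Perm ℕ) (i j : ℕ) : Prop :=
  inRothe w i j ∧ ¬ inRothe w (i+1) j ∧ ¬ inRothe w i (j+1)

/-- The minor with row set `I` and column set `J` belongs to `(i,j) ∈ E(w)`. -/
def belongsTo (w : Equiv.Perm ℕ) (I J : Finset ℕ) (i j : ℕ) : Prop :=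
  inEss w i j ∧ I ⊆ Finset.Icc 1 i ∧ J ⊆ Finset.Icc 1 j ∧
    I.card = rk w i j + 1 ∧ J.card = rk w i j + 1

/-- The minor `m_{I,J}` attends `M^{[i',j']}`. -/
def attends (w : Equiv.Perm ℕ) (I J : Finset ℕ) (i' j' : ℕ) : Prop :=
  (rk w i' j' < (I ∩ Finset.Icc 1 i').card ∧ (J ∩ Finset.Icc 1 j').card = J.card) ∨
  ((I ∩ Finset.Icc 1 i').card = I.card ∧ rk w i' j' < (J ∩ Finset.Icc 1 j').card)

/-- The minor `m_{I,J}` belonging to `(i,j) ∈ E(w)` is elusive. -/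
def elusive (w : Equiv.Perm ℕ) (I J : Finset ℕ) (i j : ℕ) : Prop :=
  belongsTo w I J i j ∧
    ∀ i' j', inEss w i' j' → rk w i' j' < rk w i j → ¬ attends w I J i' j'

/-- One step between edge-adjacent boxes of the Rothe diagram. -/
def adjStep (w : Equiv.Perm ℕ) (p q : ℕ × ℕ) : Prop :=
  inRothe w q.1 q.2 ∧
    ((p.1 = q.1 ∧ (p.2 + 1 = q.2 ∨ q.2 + 1 = p.2)) ∨
     (p.2 = q.2 ∧ (p.1 + 1 = q.1 ∨ q.1 + 1 = p.1)))

/-- p and q are in the same connected component of D(w). -/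
def sameComponent (w : Equiv.Perm ℕ) (p q : ℕ × ℕ) : Prop :=
  Relation.ReflTransGen (adjStep w) p q


/-!
Moving one box right or down inside `D(w)` does not change the rank, since the box entered has
no dot of `w` in its row to the left or in its column above. Boxes of `D(w)` of rank at most `r`
are bounded: far enough to the southeast the rank counts the dots in rows `1, …, r + 1`. Hence
the walk that keeps stepping right or down inside `D(w)` stops, and it stops at an essential box.
-/

open Finset

namespace Equiv.Perm

variable (w : Equiv.Perm ℕ)

lemma rk_succ_right {i j : ℕ} (h : inRothe w i (j + 1)) : rk w i (j + 1) = rk w i j := by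
  unfold rk
  refine congrArg _ (filter_congr fun a ha => ⟨fun hle => ?_, fun hle => by omega⟩)
  have ha : a ≤ i := (mem_Icc.mp ha).2
  by_contra hlt
  have hwa : w a = j + 1 := by omega
  have := h.2
  rw [← hwa, symm_apply_apply] at this
  omega

lemma rk_succ_down {i j : ℕ} (h : inRothe w (i + 1) j) : rk w (i + 1) j = rk w i j := by
  have hnot : ¬ w (i + 1) ≤ j := not_le.mpr h.1
  unfold rk
  rw [← Order.succ_eq_add_one, ← insert_Icc_right_eq_Icc_succ (by simp), filter_insert,
    Order.succ_eq_add_one, if_neg hnot]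

lemma le_rk_of_forall_le {m a b : ℕ} (hma : m ≤ a) (hb : ∀ x ∈ Icc 1 m, w x ≤ b) :
    m ≤ rk w a b := by
  have hsub : Icc 1 m ⊆ (Icc 1 a).filter (fun x => w x ≤ b) := fun x hx =>
    mem_filter.mpr ⟨Icc_subset_Icc_right hma hx, hb x hx⟩
  simpa [rk] using card_le_card hsub

lemma lt_sup_of_inRothe_of_rk_le {r a b : ℕ} (h : inRothe w a b) (hr : rk w a b ≤ r) :
    b < (range (r + 2)).sup w := by
  by_cases ha : a < r + 2
  · exact h.1.trans_le (le_sup (f := w) (mem_range.mpr ha))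
  · have hlt : ∃ x ∈ Icc 1 (r + 1), b < w x := by
      by_contra! hle
      have := le_rk_of_forall_le w (show r + 1 ≤ a by omega) hle
      omega
    obtain ⟨x, hx, hbx⟩ := hlt
    exact hbx.trans_le (le_sup (f := w) (mem_range.mpr (by have := (mem_Icc.mp hx).2; omega)))

lemma exists_add_lt_of_inRothe_of_rk_le (r : ℕ) :
    ∃ N, ∀ a b, inRothe w a b → rk w a b ≤ r → a + b < N := by
  set B := (range (r + 2)).sup w
  refine ⟨(range B).sup w.symm + B, fun a b h hr => ?_⟩
  have hb := lt_sup_of_inRothe_of_rk_le w h hr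
  have ha : w.symm b ≤ (range B).sup w.symm := le_sup (f := w.symm) (mem_range.mpr hb)
  have := h.2
  omega

lemma adjStep_succ_right {i j : ℕ} (h : inRothe w i (j + 1)) : adjStep w (i, j) (i, j + 1) :=
  ⟨h, .inl ⟨rfl, .inl rfl⟩⟩

lemma adjStep_succ_down {i j : ℕ} (h : inRothe w (i + 1) j) : adjStep w (i, j) (i + 1, j) :=
  ⟨h, .inr ⟨rfl, .inl rfl⟩⟩

lemma exists_essential_southeast_of_add_le {r N : ℕ}
    (hN : ∀ a b, inRothe w a b → rk w a b ≤ r → a + b < N) :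
    ∀ k i j, N ≤ i + j + k → inRothe w i j → rk w i j ≤ r →
      ∃ a b : ℕ, inEss w a b ∧ i ≤ a ∧ j ≤ b ∧
        sameComponent w (i, j) (a, b) ∧ rk w a b = rk w i j := by
  intro k
  induction k with
  | zero =>
    intro i j hk h hr
    have := hN i j h hr
    omega
  | succ k ih =>
    intro i j hk h hr
    by_cases hright : inRothe w i (j + 1)
    · have hrk := rk_succ_right w hright
      obtain ⟨a, b, he, ha, hb, hc, hab⟩ := ih i (j + 1) (by omega) hright (hrk ▸ hr)
      exact ⟨a, b, he, ha, by omega, .head (adjStep_succ_right w hright) hc, hab.trans hrk⟩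
    by_cases hdown : inRothe w (i + 1) j
    · have hrk := rk_succ_down w hdown
      obtain ⟨a, b, he, ha, hb, hc, hab⟩ := ih (i + 1) j (by omega) hdown (hrk ▸ hr)
      exact ⟨a, b, he, by omega, hb, .head (adjStep_succ_down w hdown) hc, hab.trans hrk⟩
    exact ⟨i, j, ⟨h, hdown, hright⟩, le_rfl, le_rfl, .refl, rfl⟩

end Equiv.Perm

theorem exists_essential_southeast_general (w : Equiv.Perm ℕ) (i j : ℕ) (h : inRothe w i j) :
    ∃ a b : ℕ, inEss w a b ∧ i ≤ a ∧ j ≤ b ∧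
      sameComponent w (i, j) (a, b) ∧ rk w a b = rk w i j := by
  obtain ⟨N, hN⟩ := w.exists_add_lt_of_inRothe_of_rk_le (rk w i j)
  exact w.exists_essential_southeast_of_add_le hN N i j (by omega) h le_rfl

/-- every box of D(w) has an essential box weakly southeast of it,
in the same component, with the same rank value. -/
theorem exists_essential_southeast (n : ℕ) (w : Equiv.Perm ℕ)
    (hw : ∀ a, a ∉ Finset.Icc 1 n → w a = a) (i j : ℕ) (h : inRothe w i j) :
    ∃ a b : ℕ, inEss w a b ∧ i ≤ a ∧ j ≤ b ∧
      sameComponent w (i, j) (a, b) ∧ rk w a b = rk w i j :=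
  exists_essential_southeast_general w i j h
end

section
/- Let w ∈ S_n, let (i,j) ∈ E(w) with r = r_{i,j}(w), and suppose the minor m_{I,J} with I = {i_1 < ... < i_{r+1}} ⊆ [i], J = {j_1 < ... < j_{r+1}} ⊆ [j] is elusive. Then for every 1 ≤ k ≤ r, one has r_{i_k,j}(w) ≥ k and r_{i,j_k}(w) ≥ k. -/
open Finset

namespace Equiv.Perm

lemma symm_apply_eq_self_of_forall_notMem {α : Type*} {w : Equiv.Perm α} {s : Finset α}
    (hw : ∀ a, a ∉ s → w a = a) :
    ∀ a, a ∉ s → w.symm a = a :=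
  fun a ha => w.symm_apply_eq.mpr (hw a ha).symm

lemma apply_le_max_of_forall_notMem_Icc {w : Equiv.Perm ℕ} {n : ℕ}
    (hw : ∀ a, a ∉ Icc 1 n → w a = a) (a : ℕ) : w a ≤ max a n := by
  by_cases ha : a ∈ Icc 1 n
  · by_contra hlt
    have hwa : w a ∉ Icc 1 n := by simp only [mem_Icc]; omega
    have := w.injective (hw _ hwa)
    simp only [this, mem_Icc] at hwa ha
    omega
  · simp [hw a ha]

end Equiv.Perm

section Rank

variable {w : Equiv.Perm ℕ}

lemma rk_succ_left (p q : ℕ) :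
    rk w (p + 1) q = rk w p q + if w (p + 1) ≤ q then 1 else 0 := by
  rw [rk, ← insert_Icc_right_eq_Icc_add_one (by omega), filter_insert]
  split_ifs
  · rw [card_insert_of_notMem (by simp), rk]
  · rw [rk, add_zero]

lemma rk_symm (h0 : w 0 = 0) (i j : ℕ) : rk w.symm j i = rk w i j := by
  refine card_nbij' w.symm w ?_ ?_ (fun _ _ => w.apply_symm_apply _)
    (fun _ _ => w.symm_apply_apply _)
  · intro b hb
    simp only [coe_filter, mem_Icc, Set.mem_ofPred_eq, Equiv.apply_symm_apply] at hb ⊢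
    have : w.symm b ≠ 0 := fun h => by simp [w.symm_apply_eq.mp h, h0] at hb
    omega
  · intro a ha
    simp only [coe_filter, mem_Icc, Set.mem_ofPred_eq, Equiv.symm_apply_apply] at ha ⊢
    have : w a ≠ 0 := fun h => by rw [← h0] at h; have := w.injective h; omega
    omega

lemma rk_succ_right (h0 : w 0 = 0) (p q : ℕ) :
    rk w p (q + 1) = rk w p q + if w.symm (q + 1) ≤ p then 1 else 0 := by
  rw [← rk_symm h0, ← rk_symm h0, rk_succ_left]

end Rank

section Transpose

variable {w : Equiv.Perm ℕ}

lemma inRothe_symm {i j : ℕ} : inRothe w.symm j i ↔ inRothe w i j := by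
  simp only [inRothe, Equiv.symm_symm, and_comm]

lemma inEss_symm {i j : ℕ} : inEss w.symm j i ↔ inEss w i j := by
  simp only [inEss, inRothe_symm]
  tauto

variable (h0 : w 0 = 0)
include h0

lemma attends_symm {I J : Finset ℕ} {i j : ℕ} :
    attends w.symm J I j i ↔ attends w I J i j := by
  simp only [attends, rk_symm h0]
  tauto

lemma elusive_symm {I J : Finset ℕ} {i j : ℕ} :
    elusive w.symm J I j i ↔ elusive w I J i j := by
  simp only [elusive, belongsTo, inEss_symm, rk_symm h0, attends_symm h0]
  rw [forall_comm]
  tauto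

end Transpose

section Walk

variable {n : ℕ} {w : Equiv.Perm ℕ}

lemma rk_succ_left_of_inRothe {p q : ℕ} (h : inRothe w (p + 1) q) :
    rk w (p + 1) q = rk w p q := by
  simp [rk_succ_left, h.1]

lemma rk_succ_right_of_inRothe (h0 : w 0 = 0) {p q : ℕ} (h : inRothe w p (q + 1)) :
    rk w p (q + 1) = rk w p q := by
  simp [rk_succ_right h0, h.2]

lemma lt_of_inRothe (hw : ∀ a, a ∉ Icc 1 n → w a = a) {p q : ℕ} (h : inRothe w p q) :
    p < n ∧ q < n := by
  have hp := w.apply_le_max_of_forall_notMem_Icc hw p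
  have hq := Equiv.Perm.apply_le_max_of_forall_notMem_Icc
    (w.symm_apply_eq_self_of_forall_notMem hw) q
  obtain ⟨h1, h2⟩ := h
  omega

theorem exists_inEss_of_inRothe (hw : ∀ a, a ∉ Icc 1 n → w a = a) {p q : ℕ}
    (h : inRothe w p q) :
    ∃ p' q', inEss w p' q' ∧ p ≤ p' ∧ q ≤ q' ∧ rk w p' q' = rk w p q := by
  by_cases hdown : inRothe w (p + 1) q
  · obtain ⟨p', q', he, hp, hq, hrk⟩ := exists_inEss_of_inRothe hw hdown
    exact ⟨p', q', he, by omega, hq, hrk.trans (rk_succ_left_of_inRothe hdown)⟩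
  by_cases hright : inRothe w p (q + 1)
  · obtain ⟨p', q', he, hp, hq, hrk⟩ := exists_inEss_of_inRothe hw hright
    exact ⟨p', q', he, hp, by omega,
      hrk.trans (rk_succ_right_of_inRothe (hw 0 (by simp)) hright)⟩
  exact ⟨p, q, ⟨h, hdown, hright⟩, le_rfl, le_rfl, rfl⟩
termination_by 2 * n - (p + q)
decreasing_by
  all_goals
    have := lt_of_inRothe hw h
    omega

end Walk

lemma card_inter_Icc_succ_le (S : Finset ℕ) (a : ℕ) :
    #(S ∩ Icc 1 (a + 1)) ≤ #(S ∩ Icc 1 a) + 1 := by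
  rw [← insert_Icc_right_eq_Icc_add_one (by omega), Finset.insert_inter]
  split_ifs
  · exact card_insert_le _ _
  · omega

lemma card_inter_Icc_mono (S : Finset ℕ) {a b : ℕ} (h : a ≤ b) :
    #(S ∩ Icc 1 a) ≤ #(S ∩ Icc 1 b) :=
  card_le_card (inter_subset_inter_left (Icc_subset_Icc_right h))

lemma exists_lt_apply_of_rk_lt_card (w : Equiv.Perm ℕ) (S : Finset ℕ) {a j : ℕ}
    (h : rk w a j < #(S ∩ Icc 1 a)) :
    ∃ p ≤ a, j < w p ∧ rk w p j < #(S ∩ Icc 1 p) := by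
  induction a with
  | zero => simp at h
  | succ a ih =>
    by_cases hw : j < w (a + 1)
    · exact ⟨a + 1, le_rfl, hw, h⟩
    have hrk : rk w (a + 1) j = rk w a j + 1 := by simp [rk_succ_left, le_of_not_gt hw]
    have hS := card_inter_Icc_succ_le S a
    obtain ⟨p, hp, hwp, hlt⟩ := ih (by omega)
    exact ⟨p, by omega, hwp, hlt⟩

theorem card_inter_Icc_le_rk_of_elusive {n : ℕ} {w : Equiv.Perm ℕ}
    (hw : ∀ a, a ∉ Icc 1 n → w a = a) {I J : Finset ℕ} {i j a : ℕ}
    (hel : elusive w I J i j) (ha : a ∈ I) (hk : #(I ∩ Icc 1 a) ≤ rk w i j) :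
    #(I ∩ Icc 1 a) ≤ rk w a j := by
  obtain ⟨⟨he, hI, hJ, -, -⟩, hmin⟩ := hel
  by_contra! hlt
  have hai : a ≤ i := (mem_Icc.mp (hI ha)).2
  obtain ⟨p, hpa, hwp, hp⟩ := exists_lt_apply_of_rk_lt_card w I hlt
  have hpj : inRothe w p j := ⟨hwp, by have := he.1.2; omega⟩
  obtain ⟨p', q', hess, hpp', hjq', hrk⟩ := exists_inEss_of_inRothe hw hpj
  have hIp := card_inter_Icc_mono I hpa
  refine hmin p' q' hess (by omega) (Or.inl ⟨?_, ?_⟩)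
  · have := card_inter_Icc_mono I hpp'
    omega
  · rw [inter_eq_left.mpr (hJ.trans (Icc_subset_Icc_right hjq'))]

theorem claim_rank_lower_bound_general (n : ℕ) (w : Equiv.Perm ℕ)
    (hw : ∀ a, a ∉ Finset.Icc 1 n → w a = a)
    (i j r : ℕ) (I J : Finset ℕ)
    (hr : r = rk w i j)
    (hel : elusive w I J i j) :
    ∀ k, 1 ≤ k → k ≤ r →
      (∀ a ∈ I, (I ∩ Finset.Icc 1 a).card = k → k ≤ rk w a j) ∧
      (∀ b ∈ J, (J ∩ Finset.Icc 1 b).card = k → k ≤ rk w i b) := by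
  intro k _ hk
  subst hr
  have h0 : w 0 = 0 := hw 0 (by simp)
  refine ⟨fun a ha hcard => ?_, fun b hb hcard => ?_⟩
  · subst hcard
    exact card_inter_Icc_le_rk_of_elusive hw hel ha hk
  · subst hcard
    rw [← rk_symm h0] at hk ⊢
    exact card_inter_Icc_le_rk_of_elusive (w.symm_apply_eq_self_of_forall_notMem hw)
      ((elusive_symm h0).mpr hel) hb hk

/-- Claim 2.1: for an elusive minor m_{I,J} belonging to
(i,j) ∈ E(w) with r = r_{i,j}(w), the k-th smallest row index i_k satisfies
r_{i_k,j} ≥ k, and the k-th smallest column index j_k satisfies r_{i,j_k} ≥ k,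
for 1 ≤ k ≤ r. -/
theorem claim_rank_lower_bound (n : ℕ) (w : Equiv.Perm ℕ)
    (hw : ∀ a, a ∉ Finset.Icc 1 n → w a = a)
    (i j r : ℕ) (I J : Finset ℕ)
    (he : inEss w i j) (hr : r = rk w i j)
    (hel : elusive w I J i j) :
    ∀ k, 1 ≤ k → k ≤ r →
      (∀ a ∈ I, (I ∩ Finset.Icc 1 a).card = k → k ≤ rk w a j) ∧
      (∀ b ∈ J, (J ∩ Finset.Icc 1 b).card = k → k ≤ rk w i b) :=
  claim_rank_lower_bound_general n w hw i j r I J hr hel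
end

section
/- (Shifting lemma) Let w ∈ S_n and suppose m_{I,J} is an elusive minor belonging to (i,j) ∈ E(w). If I' = (I \ {a}) ∪ {t} for some a ∈ I, t > a, t ∉ I with I' ⊆ [i], then m_{I',J} is also elusive (belonging to (i,j)). -/
/-!
Whether a minor `m_{I,J}` attends `M^{[i',j']}` depends on `I` only through `#I` and the count
`#(I ∩ [i'])`, and attending is monotone in that count. Replacing `a ∈ I` by a larger `t` keeps
`#I` and can only lower every count `#(I ∩ [k])` (the transposition `(a t)` embeds
`I' ∩ [k]` into `I ∩ [k]`), so `m_{I',J}` attends nothing that `m_{I,J}` does not.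
-/

open Finset

namespace Finset

variable {α : Type*} [DecidableEq α]

theorem card_insert_erase_of_mem_of_notMem {s : Finset α} {a t : α} (ha : a ∈ s) (ht : t ∉ s) :
    #(insert t (s.erase a)) = #s := by
  rw [card_insert_of_notMem fun h => ht (mem_of_mem_erase h), card_erase_add_one ha]

theorem card_insert_erase_inter_le {s S : Finset α} {a t : α} (ha : a ∈ s) (hS : t ∈ S → a ∈ S) :
    #(insert t (s.erase a) ∩ S) ≤ #(s ∩ S) := by
  refine card_le_card_of_injOn (Equiv.swap a t) (fun x hx => ?_) (Equiv.injective _).injOn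
  obtain ⟨hx, hxS⟩ := mem_inter.mp (mem_coe.mp hx)
  by_cases hxt : x = t
  · subst hxt
    simpa [Equiv.swap_apply_right] using ⟨ha, hS hxS⟩
  · obtain ⟨hxa, hxs⟩ := mem_erase.mp ((mem_insert.mp hx).resolve_left hxt)
    simpa [Equiv.swap_apply_of_ne_of_ne hxa hxt] using ⟨hxs, hxS⟩

end Finset

theorem card_insert_erase_inter_Icc_le {I : Finset ℕ} {a t : ℕ} (k : ℕ) (ha : a ∈ I) (ha₁ : 1 ≤ a)
    (hat : a < t) : #(insert t (I.erase a) ∩ Icc 1 k) ≤ #(I ∩ Icc 1 k) :=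
  card_insert_erase_inter_le ha fun htk => by
    rw [mem_Icc] at htk ⊢
    omega

theorem attends.of_card_inter_le {w : Equiv.Perm ℕ} {I I' J : Finset ℕ} {i' j' : ℕ}
    (hcard : #I ≤ #I') (hcount : #(I' ∩ Icc 1 i') ≤ #(I ∩ Icc 1 i'))
    (h : attends w I' J i' j') : attends w I J i' j' := by
  have hle : #(I ∩ Icc 1 i') ≤ #I := card_le_card inter_subset_left
  rcases h with ⟨hrows, hcols⟩ | ⟨hrows, hcols⟩
  · exact Or.inl ⟨hrows.trans_le hcount, hcols⟩
  · exact Or.inr ⟨by omega, hcols⟩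

theorem elusive.of_card_inter_le {w : Equiv.Perm ℕ} {I I' J : Finset ℕ} {i j : ℕ}
    (hel : elusive w I J i j) (hsub : I' ⊆ Icc 1 i) (hcard : #I' = #I)
    (hcount : ∀ k, #(I' ∩ Icc 1 k) ≤ #(I ∩ Icc 1 k)) : elusive w I' J i j := by
  obtain ⟨⟨hess, -, hJ, hIcard, hJcard⟩, hmin⟩ := hel
  refine ⟨⟨hess, hsub, hJ, hcard.trans hIcard, hJcard⟩, fun i' j' hess' hrk hatt => ?_⟩
  exact hmin i' j' hess' hrk (hatt.of_card_inter_le hcard.ge (hcount i'))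

theorem shifting_lemma_general (w : Equiv.Perm ℕ)
    (i j : ℕ) (I J I' : Finset ℕ)
    (hel : elusive w I J i j)
    (a t : ℕ) (ha : a ∈ I) (hat : a < t) (ht : t ∉ I)
    (hI' : I' = insert t (I.erase a)) (hsub : I' ⊆ Finset.Icc 1 i) :
    elusive w I' J i j := by
  have ha₁ : 1 ≤ a := (mem_Icc.mp (hel.1.2.1 ha)).1
  subst hI'
  exact hel.of_card_inter_le hsub (card_insert_erase_of_mem_of_notMem ha ht)
    fun k => card_insert_erase_inter_Icc_le k ha ha₁ hat

/-- Shifting lemma: replacing a row index of an elusive minor by a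
larger one (staying within [i]) preserves elusiveness. -/
theorem shifting_lemma (n : ℕ) (w : Equiv.Perm ℕ)
    (hw : ∀ a, a ∉ Finset.Icc 1 n → w a = a)
    (i j : ℕ) (I J I' : Finset ℕ)
    (hel : elusive w I J i j)
    (a t : ℕ) (ha : a ∈ I) (hat : a < t) (ht : t ∉ I)
    (hI' : I' = insert t (I.erase a)) (hsub : I' ⊆ Finset.Icc 1 i) :
    elusive w I' J i j :=
  shifting_lemma_general w i j I J I' hel a t ha hat ht hI' hsub
end

section
/- Let w ∈ S_n and let m = m_{I,J} be an essential minor belonging to (i,j) ∈ E(w) that is not elusive, say attending (i',j') ∈ E(w) with r_{i',j'}(w) < r_{i,j}(w). Then the determinant m_{I,J} lies in the ideal of the polynomial ring k[x_{ab}] generated by the (r_{i',j'}+1) × (r_{i',j'}+1) minors of the generic matrix with rows in [i'] and columns in [j']. -/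
/-- The minor of the generic matrix with row set I and column set J,
as a multivariate polynomial. -/
noncomputable def minorPoly (k : Type*) [CommRing k] (I J : Finset ℕ)
    (h : J.card = I.card) : MvPolynomial (ℕ × ℕ) k :=
  (Matrix.of fun a b : Fin I.card =>
    MvPolynomial.X (I.orderEmbOfFin rfl a, J.orderEmbOfFin h b)).det


/-!
Laplace expansion along a row writes an `r × r` minor as a combination of `(r-1) × (r-1)` minors
avoiding that row, with the same columns up to one. Expanding successively along every row of
`I` outside a chosen set `R ⊆ I` of rows therefore places `m_{I,J}` in the ideal of the
`#R`-minors with rows in `R` and columns in `J`. If `m_{I,J}` attends `(i', j')` through its rows,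
take for `R` any `r_{i',j'} + 1` rows of `I` within `[i']`; all of `J` lies in `[j']`. The case of
columns follows by transposing, i.e. by renaming `x_{ab} ↦ x_{ba}`.
-/

open MvPolynomial

namespace Finset

lemma subset_of_card_inter_eq {α : Type*} [DecidableEq α] {s t : Finset α}
    (h : (s ∩ t).card = s.card) : s ⊆ t :=
  inter_eq_left.1 (eq_of_subset_of_card_le inter_subset_left h.ge)

variable {α : Type*} [LinearOrder α]

lemma card_erase_orderEmbOfFin {s : Finset α} {n : ℕ} (hs : s.card = n + 1) (a : Fin (n + 1)) :
    (s.erase (s.orderEmbOfFin hs a)).card = n := by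
  rw [card_erase_of_mem (s.orderEmbOfFin_mem hs a), hs, Nat.add_sub_cancel]

lemma orderEmbOfFin_erase {s : Finset α} {n : ℕ} (hs : s.card = n + 1) (a : Fin (n + 1))
    (h : (s.erase (s.orderEmbOfFin hs a)).card = n) (x : Fin n) :
    (s.erase (s.orderEmbOfFin hs a)).orderEmbOfFin h x = s.orderEmbOfFin hs (a.succAbove x) :=
  (congrFun (Finset.orderEmbOfFin_unique h (fun x => Finset.mem_erase.2
    ⟨(s.orderEmbOfFin hs).injective.ne (Fin.succAbove_ne a x), s.orderEmbOfFin_mem hs _⟩)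
    ((s.orderEmbOfFin hs).strictMono.comp (Fin.strictMono_succAbove a))) x).symm

end Finset

noncomputable def minorIdeal (k : Type*) [CommRing k] (t : ℕ) (R C : Finset ℕ) :
    Ideal (MvPolynomial (ℕ × ℕ) k) :=
  Ideal.span {f | ∃ (I' J' : Finset ℕ) (h' : J'.card = I'.card),
    I' ⊆ R ∧ J' ⊆ C ∧ I'.card = t ∧ f = minorPoly k I' J' h'}

section Minors

variable {k : Type*} [CommRing k]

lemma minorPoly_mem_minorIdeal {I J R C : Finset ℕ} (h : J.card = I.card) (hI : I ⊆ R)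
    (hJ : J ⊆ C) : minorPoly k I J h ∈ minorIdeal k I.card R C :=
  Ideal.subset_span ⟨I, J, h, hI, hJ, rfl, rfl⟩

lemma minorIdeal_mono {t : ℕ} {R R' C C' : Finset ℕ} (hR : R ⊆ R') (hC : C ⊆ C') :
    minorIdeal k t R C ≤ minorIdeal k t R' C' := by
  refine Ideal.span_mono ?_
  rintro f ⟨I', J', h', hI', hJ', hcard, rfl⟩
  exact ⟨I', J', h', hI'.trans hR, hJ'.trans hC, hcard, rfl⟩

lemma minorPoly_eq_det {I J : Finset ℕ} (h : J.card = I.card) {t : ℕ} (ht : I.card = t) :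
    minorPoly k I J h = (Matrix.of fun a b : Fin t =>
      X (I.orderEmbOfFin ht a, J.orderEmbOfFin (h.trans ht) b)).det := by
  subst ht; rfl

lemma minorPoly_eq_sum_cofactor {I J : Finset ℕ} (h : J.card = I.card) {n : ℕ}
    (hn : I.card = n + 1) (a : Fin (n + 1)) :
    minorPoly k I J h = ∑ b : Fin (n + 1),
      (-1) ^ ((a : ℕ) + (b : ℕ)) * X (I.orderEmbOfFin hn a, J.orderEmbOfFin (h.trans hn) b) *
        minorPoly k (I.erase (I.orderEmbOfFin hn a)) (J.erase (J.orderEmbOfFin (h.trans hn) b))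
          ((Finset.card_erase_orderEmbOfFin _ b).trans
            (Finset.card_erase_orderEmbOfFin hn a).symm) := by
  rw [minorPoly_eq_det h hn, Matrix.det_succ_row _ a]
  refine Finset.sum_congr rfl fun b _ => ?_
  rw [minorPoly_eq_det _ (Finset.card_erase_orderEmbOfFin hn a)]
  congr 2
  ext p q
  simp only [Matrix.submatrix_apply, Matrix.of_apply, Finset.orderEmbOfFin_erase]

lemma minorPoly_mem_of_erase_mem {I J : Finset ℕ} (h : J.card = I.card) {r : ℕ} (hr : r ∈ I)
    {𝔞 : Ideal (MvPolynomial (ℕ × ℕ) k)}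
    (hmem : ∀ c (h' : (J.erase c).card = (I.erase r).card),
      minorPoly k (I.erase r) (J.erase c) h' ∈ 𝔞) :
    minorPoly k I J h ∈ 𝔞 := by
  have hn : I.card = (I.card - 1) + 1 :=
    (Nat.succ_pred_eq_of_pos (Finset.card_pos.2 ⟨r, hr⟩)).symm
  obtain ⟨a, rfl⟩ : ∃ a, I.orderEmbOfFin hn a = r := by
    rw [← Set.mem_range, Finset.range_orderEmbOfFin]; exact hr
  rw [minorPoly_eq_sum_cofactor h hn a]
  exact Ideal.sum_mem _ fun b _ => Ideal.mul_mem_left _ _ (hmem _ _)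

lemma minorPoly_mem_minorIdeal_of_subset_rows {I J R : Finset ℕ} (h : J.card = I.card)
    (hRI : R ⊆ I) : minorPoly k I J h ∈ minorIdeal k R.card R J := by
  induction hm : I.card - R.card generalizing I J with
  | zero =>
    obtain rfl : R = I := Finset.eq_of_subset_of_card_le hRI (Nat.sub_eq_zero_iff_le.1 hm)
    exact minorPoly_mem_minorIdeal h subset_rfl subset_rfl
  | succ m ih =>
    obtain ⟨r, hrI, hrR⟩ : ∃ r ∈ I, r ∉ R := Finset.not_subset.1 fun hIR => by
      have := Finset.card_le_card hIR; omega
    refine minorPoly_mem_of_erase_mem h hrI fun c h' => ?_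
    have hR : R ⊆ I.erase r := fun x hx =>
      Finset.mem_erase.2 ⟨ne_of_mem_of_not_mem hx hrR, hRI hx⟩
    have hm' : (I.erase r).card - R.card = m := by rw [Finset.card_erase_of_mem hrI]; omega
    exact minorIdeal_mono subset_rfl (Finset.erase_subset c J) (ih h' hR hm')

lemma minorPoly_mem_minorIdeal_of_le_card_inter_rows {I J R C : Finset ℕ} {t : ℕ}
    (h : J.card = I.card) (ht : t ≤ (I ∩ R).card) (hJ : J ⊆ C) :
    minorPoly k I J h ∈ minorIdeal k t R C := by
  obtain ⟨R', hR', rfl⟩ := Finset.exists_subset_card_eq ht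
  exact minorIdeal_mono (hR'.trans Finset.inter_subset_right) hJ
    (minorPoly_mem_minorIdeal_of_subset_rows h (hR'.trans Finset.inter_subset_left))

lemma rename_prodComm_minorPoly {I J : Finset ℕ} (h : J.card = I.card) :
    rename (Equiv.prodComm ℕ ℕ) (minorPoly k I J h) = minorPoly k J I h.symm := by
  rw [minorPoly_eq_det h.symm h, minorPoly, AlgHom.map_det, ← Matrix.det_transpose]
  congr 1
  ext a b
  simp [rename_X]

lemma map_rename_prodComm_minorIdeal_le {t : ℕ} {R C : Finset ℕ} :
    (minorIdeal k t R C).map (rename (Equiv.prodComm ℕ ℕ)) ≤ minorIdeal k t C R := by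
  rw [minorIdeal, Ideal.map_span]
  refine Ideal.span_le.2 ?_
  rintro f ⟨g, ⟨I', J', h', hI', hJ', rfl, rfl⟩, rfl⟩
  rw [rename_prodComm_minorPoly]
  exact (congrArg (minorIdeal k · C R) h').le (minorPoly_mem_minorIdeal h'.symm hJ' hI')

lemma minorPoly_mem_minorIdeal_of_le_card_inter_cols {I J R C : Finset ℕ} {t : ℕ}
    (h : J.card = I.card) (ht : t ≤ (J ∩ C).card) (hI : I ⊆ R) :
    minorPoly k I J h ∈ minorIdeal k t R C := by
  rw [← rename_prodComm_minorPoly h.symm]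
  exact map_rename_prodComm_minorIdeal_le
    (Ideal.mem_map_of_mem _ (minorPoly_mem_minorIdeal_of_le_card_inter_rows h.symm ht hI))

end Minors

theorem nonelusive_in_smaller_ideal_general (k : Type*) [Field k]
    (w : Equiv.Perm ℕ)
    (I J : Finset ℕ) (h : J.card = I.card) (i' j' : ℕ)
    (ha : attends w I J i' j') :
    minorPoly k I J h ∈ Ideal.span
      {f : MvPolynomial (ℕ × ℕ) k | ∃ (I' J' : Finset ℕ) (h' : J'.card = I'.card),
        I' ⊆ Finset.Icc 1 i' ∧ J' ⊆ Finset.Icc 1 j' ∧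
        I'.card = rk w i' j' + 1 ∧ f = minorPoly k I' J' h'} := by
  change minorPoly k I J h ∈ minorIdeal k (rk w i' j' + 1) (Finset.Icc 1 i') (Finset.Icc 1 j')
  rcases ha with ⟨hrows, hJ⟩ | ⟨hI, hcols⟩
  · exact minorPoly_mem_minorIdeal_of_le_card_inter_rows h hrows
      (Finset.subset_of_card_inter_eq hJ)
  · exact minorPoly_mem_minorIdeal_of_le_card_inter_cols h hcols
      (Finset.subset_of_card_inter_eq hI)

/-- a non-elusive essential minor attending (i',j') lies in the ideal
generated by the (r_{i',j'}+1)-size minors of the northwest i' × j' generic submatrix. -/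
theorem nonelusive_in_smaller_ideal (k : Type*) [Field k]
    (n : ℕ) (w : Equiv.Perm ℕ) (hw : ∀ a, a ∉ Finset.Icc 1 n → w a = a)
    (I J : Finset ℕ) (h : J.card = I.card) (i j i' j' : ℕ)
    (hb : belongsTo w I J i j) (he' : inEss w i' j')
    (hr : rk w i' j' < rk w i j) (ha : attends w I J i' j') :
    minorPoly k I J h ∈ Ideal.span
      {f : MvPolynomial (ℕ × ℕ) k | ∃ (I' J' : Finset ℕ) (h' : J'.card = I'.card),
        I' ⊆ Finset.Icc 1 i' ∧ J' ⊆ Finset.Icc 1 j' ∧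
        I'.card = rk w i' j' + 1 ∧ f = minorPoly k I' J' h'} :=
  nonelusive_in_smaller_ideal_general k w I J h i' j' ha
end

section
/- Let w ∈ S_n be vexillary (i.e., 2143-avoiding). Then no box of the essential set E(w) is strictly northwest of another: there do not exist (i,j), (i',j') ∈ E(w) with i < i' and j < j'. -/
def contains1342 (w : Equiv.Perm ℕ) : Prop :=
  ∃ a1 a2 a3 a4 : ℕ, a1 < a2 ∧ a2 < a3 ∧ a3 < a4 ∧
    w a1 < w a4 ∧ w a4 < w a2 ∧ w a2 < w a3

def contains1432 (w : Equiv.Perm ℕ) : Prop :=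
  ∃ a1 a2 a3 a4 : ℕ, a1 < a2 ∧ a2 < a3 ∧ a3 < a4 ∧
    w a1 < w a4 ∧ w a4 < w a3 ∧ w a3 < w a2

def contains1423 (w : Equiv.Perm ℕ) : Prop :=
  ∃ a1 a2 a3 a4 : ℕ, a1 < a2 ∧ a2 < a3 ∧ a3 < a4 ∧
    w a1 < w a3 ∧ w a3 < w a4 ∧ w a4 < w a2

def contains2143 (w : Equiv.Perm ℕ) : Prop :=
  ∃ a1 a2 a3 a4 : ℕ, a1 < a2 ∧ a2 < a3 ∧ a3 < a4 ∧
    w a2 < w a1 ∧ w a1 < w a4 ∧ w a4 < w a3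

/-!
Let `(i, j)` be essential and `(i', j')` a box of the diagram with `i < i'`, `j < j'`.
Leaving the diagram downwards at `(i + 1, j)` forces `w (i + 1) ≤ j`, and leaving it to the
right at `(i, j + 1)` yields a row `p ≤ i` with `j < w p < j'`. Together with the rows `i'` and
`w⁻¹ j'` of the box `(i', j')`, the rows `p < i + 1 < i' < w⁻¹ j'` form a `2143` pattern.
-/

theorem inRothe_symm_iff {w : Equiv.Perm ℕ} {i j : ℕ} :
    inRothe w.symm j i ↔ inRothe w i j := by
  simp only [inRothe, Equiv.symm_symm, and_comm]

theorem inRothe.apply_succ_le {w : Equiv.Perm ℕ} {i j : ℕ} (h : inRothe w i j)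
    (hbelow : ¬ inRothe w (i + 1) j) : w (i + 1) ≤ j := by
  by_contra! hlt
  have hrow : w.symm j = i + 1 := by
    by_contra hne
    exact hbelow ⟨hlt, by have := h.2; omega⟩
  have : w (i + 1) = j := by rw [← hrow, Equiv.apply_symm_apply]
  omega

theorem inRothe.symm_apply_succ_le {w : Equiv.Perm ℕ} {i j : ℕ} (h : inRothe w i j)
    (hright : ¬ inRothe w i (j + 1)) : w.symm (j + 1) ≤ i :=
  (inRothe_symm_iff.mpr h).apply_succ_le (mt inRothe_symm_iff.mp hright)

theorem inRothe.exists_le_apply_mem_Ioo {w : Equiv.Perm ℕ} {i j j' : ℕ} (h : inRothe w i j)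
    (hright : ¬ inRothe w i (j + 1)) (hjj' : j < j') (hi : i < w.symm j') :
    ∃ p ≤ i, j < w p ∧ w p < j' := by
  by_cases hwi : w i < j'
  · exact ⟨i, le_rfl, h.1, hwi⟩
  · refine ⟨w.symm (j + 1), h.symm_apply_succ_le hright, by simp, ?_⟩
    have hp := h.symm_apply_succ_le hright
    have hne : j + 1 ≠ j' := by
      rintro rfl
      omega
    rw [Equiv.apply_symm_apply]
    omega

theorem vexillary_essential_not_nw_general (w : Equiv.Perm ℕ)
    (hvex : ¬ contains2143 w) :
    ¬ ∃ i j i' j' : ℕ, inEss w i j ∧ inEss w i' j' ∧ i < i' ∧ j < j' := by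
  rintro ⟨i, j, i', j', ⟨hij, hbelow, hright⟩, ⟨hij', -, -⟩, hii', hjj'⟩
  have hsucc : w (i + 1) ≤ j := hij.apply_succ_le hbelow
  obtain ⟨p, hpi, hjp, hpj'⟩ :=
    hij.exists_le_apply_mem_Ioo hright hjj' (hii'.trans hij'.2)
  have hj'i' : j' < w i' := hij'.1
  have hcol : w (w.symm j') = j' := w.apply_symm_apply j'
  have hsucc_ne : i + 1 ≠ i' := by
    rintro rfl
    omega
  exact hvex ⟨p, i + 1, i', w.symm j', by omega, by omega, hij'.2, by omega, by omega, by omega⟩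

/-- for a vexillary (2143-avoiding) permutation, no essential box
is strictly northwest of another. -/
theorem vexillary_essential_not_nw (n : ℕ) (w : Equiv.Perm ℕ)
    (hw : ∀ a, a ∉ Finset.Icc 1 n → w a = a)
    (hvex : ¬ contains2143 w) :
    ¬ ∃ i j i' j' : ℕ, inEss w i j ∧ inEss w i' j' ∧ i < i' ∧ j < j' :=
  vexillary_essential_not_nw_general w hvex
end

section
/- Let w ∈ S_n and suppose (i,j) ∈ D(w), r = r_{i,j}(w), and there exist indices a_1 < a_2 with a_2 < i, w(a_1) < j < w(a_2), and i - r - 1 ≥ a_1. If additionally w(i-r-1) < j, then there exists a with i-r-1 < a < i and (a,j) ∈ D(w); consequently w contains the pattern 1342 or 1432 via the indices i-r-1 < a < i < w⁻¹(j). -/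
/- Of the `r + 1` positions `i - r - 1, …, i - 1`, at most `r` can carry a value `≤ j`,
because `r = r_{i,j}(w)`; the first one does, so a later one `a` has `w a > j`, and `a < i < w⁻¹ j`
puts `(a, j)` in `D(w)`. The positions `i - r - 1 < a < i < w⁻¹ j` then form a 1342 or a 1432
pattern according to the order of `w a` and `w i`. When `i - r - 1 = 0` the count breaks down
(position `0` lies outside `[1, i]`), and `a₂` itself is the required position. -/

theorem exists_mem_Ico_lt_apply_of_rk_lt (w : Equiv.Perm ℕ) {i j k : ℕ} (hk : 1 ≤ k)
    (h : rk w i j < i - k) : ∃ a ∈ Finset.Ico k i, j < w a := by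
  by_contra! hle
  have hsub : Finset.Ico k i ⊆ (Finset.Icc 1 i).filter (fun a => w a ≤ j) := fun a ha => by
    rw [Finset.mem_Ico] at ha
    exact Finset.mem_filter.2 ⟨Finset.mem_Icc.2 ⟨hk.trans ha.1, ha.2.le⟩, hle a (Finset.mem_Ico.2 ha)⟩
  have hcard := Finset.card_le_card hsub
  rw [Nat.card_Ico] at hcard
  exact h.not_ge hcard

theorem contains1342_or_contains1432 {w : Equiv.Perm ℕ} {a₁ a₂ a₃ a₄ : ℕ}
    (h12 : a₁ < a₂) (h23 : a₂ < a₃) (h34 : a₃ < a₄)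
    (h14 : w a₁ < w a₄) (h42 : w a₄ < w a₂) (h43 : w a₄ < w a₃) :
    contains1342 w ∨ contains1432 w := by
  rcases lt_or_gt_of_ne (w.injective.ne h23.ne) with h | h
  · exact Or.inl ⟨a₁, a₂, a₃, a₄, h12, h23, h34, h14, h42, h⟩
  · exact Or.inr ⟨a₁, a₂, a₃, a₄, h12, h23, h34, h14, h43, h⟩

theorem pigeonhole_pattern_step_general (w : Equiv.Perm ℕ)
    (i j r : ℕ) (hb : inRothe w i j) (hr : r = rk w i j)
    (a₁ a₂ : ℕ) (h12 : a₁ < a₂) (h2i : a₂ < i)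
    (hv2 : j < w a₂)
    (hlow : w (i - (r + 1)) < j) :
    (∃ a : ℕ, i - (r + 1) < a ∧ a < i ∧ inRothe w a j) ∧
    (contains1342 w ∨ contains1432 w) := by
  obtain ⟨hji, hiw⟩ := hb
  have hD : ∃ a, i - (r + 1) < a ∧ a < i ∧ inRothe w a j := by
    rcases Nat.eq_zero_or_pos (i - (r + 1)) with hk | hk
    · exact ⟨a₂, by omega, h2i, hv2, h2i.trans hiw⟩
    · obtain ⟨a, ha, hja⟩ := exists_mem_Ico_lt_apply_of_rk_lt w (i := i) (j := j) hk (by omega)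
      rw [Finset.mem_Ico] at ha
      exact ⟨a, ha.1.lt_of_ne (by rintro rfl; omega), ha.2, hja, ha.2.trans hiw⟩
  refine ⟨hD, ?_⟩
  obtain ⟨a, hka, hai, hja, -⟩ := hD
  have hwj : w (w.symm j) = j := w.apply_symm_apply j
  exact contains1342_or_contains1432 hka hai hiw (by rwa [hwj]) (by rwa [hwj]) (by rwa [hwj])

/-- in the setting of the proof of Corollary 1.8, if w(i-r-1) < j
then some (a,j) ∈ D(w) with i-r-1 < a < i, and consequently w contains 1342 or 1432. -/
theorem pigeonhole_pattern_step (n : ℕ) (w : Equiv.Perm ℕ)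
    (hw : ∀ a, a ∉ Finset.Icc 1 n → w a = a)
    (i j r : ℕ) (hb : inRothe w i j) (hr : r = rk w i j)
    (a₁ a₂ : ℕ) (h12 : a₁ < a₂) (h2i : a₂ < i)
    (hv1 : w a₁ < j) (hv2 : j < w a₂)
    (ha1 : a₁ ≤ i - (r + 1))
    (hlow : w (i - (r + 1)) < j) :
    (∃ a : ℕ, i - (r + 1) < a ∧ a < i ∧ inRothe w a j) ∧
    (contains1342 w ∨ contains1432 w) :=
  pigeonhole_pattern_step_general w i j r hb hr a₁ a₂ h12 h2i hv2 hlow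
end
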